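/- For integers 2 ≤ k ≤ n−1, the coefficient of t² in the polynomial F_{k,n}(t−1) is at least 1/(k(n−1)). -/

import Mathlib

open Set Polynomial Pointwise

namespace EhrhartMatroid

variable {α : Type*}

/-- A circuit: a dependent set all of whose proper subsets are independent. -/
def IsCircuit (M : Matroid α) (C : Set α) : Prop :=
  M.Dep C ∧ ∀ D, D ⊂ C → M.Indep D

/-- A hyperplane: a maximal proper flat. -/
def IsHyperplane (M : Matroid α) (H : Set α) : Prop :=
  M.IsFlat H ∧ H ≠ M.E ∧ ∀ F, M.IsFlat F → H ⊆ F → F = H ∨ F = M.E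

/-- A circuit-hyperplane: simultaneously a circuit and a hyperplane. -/
def IsCircuitHyperplane (M : Matroid α) (H : Set α) : Prop :=
  IsCircuit M H ∧ IsHyperplane M H

/-- The rank of a matroid: the (common) cardinality of its bases. -/
noncomputable def rank (M : Matroid α) : ℕ :=
  sSup {n | ∃ B, M.IsBase B ∧ B.ncard = n}

/-- A paving matroid: every circuit has cardinality at least the rank. -/
def IsPaving (M : Matroid α) : Prop :=
  ∀ C, IsCircuit M C → rank M ≤ C.ncard

/-- A sparse paving matroid: both the matroid and its dual are paving. -/
def IsSparsePaving (M : Matroid α) : Prop :=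
  IsPaving M ∧ IsPaving M✶

/-- A matroid is connected if any two elements of the ground set either
coincide or lie in a common circuit. -/
def Connected (M : Matroid α) : Prop :=
  M.E.Nonempty ∧ ∀ e ∈ M.E, ∀ f ∈ M.E,
    e = f ∨ ∃ C, IsCircuit M C ∧ e ∈ C ∧ f ∈ C

/-- The basis polytope of a matroid on `Fin n`: the convex hull of the
indicator vectors of the bases. -/
noncomputable def basisPolytope {n : ℕ} (M : Matroid (Fin n)) : Set (Fin n → ℝ) :=
  convexHull ℝ {x | ∃ B, M.IsBase B ∧ x = Set.indicator B 1}

/-- The hypersimplex `Δ_{k,n}`: the convex hull of all 0/1-vectors with exactly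
`k` coordinates equal to `1`. It is the basis polytope of `U_{k,n}`. -/
noncomputable def hypersimplex (k n : ℕ) : Set (Fin n → ℝ) :=
  convexHull ℝ {x | ∃ B : Set (Fin n), B.ncard = k ∧ x = Set.indicator B 1}

/-- The number of lattice points in the `t`-th dilate of `P ⊆ ℝ^n`. -/
noncomputable def latticeCount {n : ℕ} (P : Set (Fin n → ℝ)) (t : ℕ) : ℕ :=
  {z : Fin n → ℤ | (fun i => (z i : ℝ)) ∈ (t : ℝ) • P}.ncard

/-- A matroid on `Fin n` is Ehrhart positive if the polynomial counting the lattice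
points of the dilates of its basis polytope has positive coefficients in all degrees
`0, …, natDegree`. -/
def EhrhartPositive {n : ℕ} (M : Matroid (Fin n)) : Prop :=
  ∀ p : Polynomial ℚ,
    (∀ t : ℕ, p.eval (t : ℚ) = latticeCount (basisPolytope M) t) →
    ∀ m ≤ p.natDegree, 0 < p.coeff m

/-- The polynomial `binom(t+j, j) = (t+1)(t+2)⋯(t+j)/j!` in `ℚ[t]`. -/
noncomputable def binomPoly (j : ℕ) : Polynomial ℚ :=
  Polynomial.C (1 / (j.factorial : ℚ)) *
    ∏ i ∈ Finset.range j, (Polynomial.X + Polynomial.C ((i : ℚ) + 1))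

/-- The Ehrhart polynomial `F_{k,n}` of the minimal matroid `T_{k,n}`. -/
noncomputable def F (k n : ℕ) : Polynomial ℚ :=
  Polynomial.C (1 / (((n - 1).choose (k - 1) : ℕ) : ℚ)) * binomPoly (n - k) *
    ∑ j ∈ Finset.range k, Polynomial.C (((n - k - 1 + j).choose j : ℕ) : ℚ) * binomPoly j

/-- The shifted polynomial `F_{k,n}(t-1)`. -/
noncomputable def Fshift (k n : ℕ) : Polynomial ℚ :=
  (F k n).comp (Polynomial.X - 1)

/-! Under `t ↦ t - 1` the polynomial `binom(t+j, j)` becomes the rising factorial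
`t(t+1)⋯(t+j-1)/j!`, so `F_{k,n}(t-1)` is a positive combination of products of rising
factorials, whose coefficients are all nonnegative. Keeping only the summand `j = k-1`, and in its
`t²`-coefficient only the product of the two linear coefficients, already gives `1/((k-1)(n-1))`
by `binom(n-2, k-1)(n-1) = binom(n-1, k-1)(n-k)`. -/

open scoped Nat

section OrderedSemiring

variable {R : Type*} [Semiring R] [PartialOrder R] [IsOrderedRing R] {p q : R[X]}

lemma coeff_mul_nonneg (hp : ∀ i, 0 ≤ p.coeff i) (hq : ∀ i, 0 ≤ q.coeff i) (n : ℕ) :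
    0 ≤ (p * q).coeff n := by
  rw [coeff_mul]
  exact Finset.sum_nonneg fun x _ => mul_nonneg (hp x.1) (hq x.2)

lemma coeff_mul_le_coeff_mul_add (hp : ∀ i, 0 ≤ p.coeff i) (hq : ∀ i, 0 ≤ q.coeff i)
    (i j : ℕ) : p.coeff i * q.coeff j ≤ (p * q).coeff (i + j) := by
  rw [coeff_mul]
  exact Finset.single_le_sum (f := fun x : ℕ × ℕ => p.coeff x.1 * q.coeff x.2)
    (fun x _ => mul_nonneg (hp x.1) (hq x.2))
    ((Finset.HasAntidiagonal.mem_antidiagonal (a := (i, j))).mpr rfl)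

lemma ascPochhammer_coeff_nonneg (n i : ℕ) : 0 ≤ (ascPochhammer R n).coeff i := by
  rw [← ascPochhammer_map (Nat.castRingHom R), coeff_map]
  exact Nat.cast_nonneg _

end OrderedSemiring

lemma ascPochhammer_eq_prod_range {S : Type*} [CommSemiring S] (n : ℕ) :
    ascPochhammer S n = ∏ i ∈ Finset.range n, (X + (i : S[X])) := by
  induction n with
  | zero => simp
  | succ n ih => rw [ascPochhammer_succ_right, ih, Finset.prod_range_succ]

lemma ascPochhammer_coeff_one {S : Type*} [Semiring S] (n : ℕ) :
    (ascPochhammer S (n + 1)).coeff 1 = n ! := by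
  induction n with
  | zero => simp
  | succ n ih =>
    have h0 : (ascPochhammer S (n + 1)).coeff 0 = 0 := by
      rw [coeff_zero_eq_eval_zero, ascPochhammer_ne_zero_eval_zero _ n.succ_ne_zero]
    rw [ascPochhammer_succ_right, ← C_eq_natCast, mul_add, coeff_add, coeff_mul_X, coeff_mul_C,
      h0, ih, zero_add, Nat.factorial_succ, Nat.cast_mul, Nat.cast_comm]

lemma binomPoly_comp_X_sub_one (j : ℕ) :
    (binomPoly j).comp (X - 1) = C (1 / (j ! : ℚ)) * ascPochhammer ℚ j := by
  rw [binomPoly, mul_comp, C_comp, prod_comp, ascPochhammer_eq_prod_range]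
  congr 1
  refine Finset.prod_congr rfl fun i _ => ?_
  rw [add_comp, X_comp, C_comp, map_add, map_natCast, C_1]
  ring

lemma coeff_Fshift (k n i : ℕ) :
    (Fshift k n).coeff i = ∑ j ∈ Finset.range k,
      ((n - k - 1 + j).choose j : ℚ) / ((n - 1).choose (k - 1) * (n - k) ! * j !) *
        (ascPochhammer ℚ (n - k) * ascPochhammer ℚ j).coeff i := by
  simp only [Fshift, F, mul_comp, C_comp, sum_comp, binomPoly_comp_X_sub_one, Finset.mul_sum,
    finsetSum_coeff]
  refine Finset.sum_congr rfl fun j _ => ?_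
  rw [← coeff_C_mul]
  congr 1
  simp only [div_eq_mul_inv, mul_inv, C_mul, one_mul]
  ring

theorem one_div_le_coeff_two_Fshift (a b : ℕ) :
    1 / (((a : ℚ) + 1) * (a + b + 2)) ≤ (Fshift (a + 2) (a + b + 3)).coeff 2 := by
  rw [coeff_Fshift, show a + b + 3 - (a + 2) = b + 1 by omega,
    show a + b + 3 - 1 = a + b + 2 by omega, show a + 2 - 1 = a + 1 by omega, Nat.add_sub_cancel]
  have hchoose : ((b + (a + 1)).choose (a + 1) : ℚ) * (a + b + 2) =
      ((a + b + 2).choose (a + 1) : ℚ) * (b + 1) := by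
    have h := Nat.choose_mul_succ_eq (a + b + 1) (a + 1)
    rw [show a + b + 1 + 1 - (a + 1) = b + 1 by omega, show a + b + 1 + 1 = a + b + 2 by omega,
      show a + b + 1 = b + (a + 1) by omega] at h
    exact_mod_cast h
  set c : ℚ := ↑((b + (a + 1)).choose (a + 1))
  set B : ℚ := ↑((a + b + 2).choose (a + 1))
  have hB : B ≠ 0 := Nat.cast_ne_zero.mpr (Nat.choose_pos (by omega)).ne'
  have hlead : (b ! * a ! : ℚ) ≤ (ascPochhammer ℚ (b + 1) * ascPochhammer ℚ (a + 1)).coeff 2 := by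
    simpa only [ascPochhammer_coeff_one] using coeff_mul_le_coeff_mul_add
      (ascPochhammer_coeff_nonneg (b + 1)) (ascPochhammer_coeff_nonneg (a + 1)) 1 1
  calc 1 / (((a : ℚ) + 1) * (a + b + 2))
      = c / (B * (b + 1)! * (a + 1)!) * (b ! * a !) := by
        rw [Nat.factorial_succ, Nat.factorial_succ]
        push_cast
        field_simp
        linear_combination -hchoose
    _ ≤ c / (B * (b + 1)! * (a + 1)!) *
          (ascPochhammer ℚ (b + 1) * ascPochhammer ℚ (a + 1)).coeff 2 := by
        gcongr
    _ ≤ _ := by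
        refine Finset.single_le_sum (N := ℚ) (fun j _ => ?_) (Finset.self_mem_range_succ (a + 1))
        exact mul_nonneg (by positivity)
          (coeff_mul_nonneg (ascPochhammer_coeff_nonneg _) (ascPochhammer_coeff_nonneg _) 2)

theorem coeff_two_Fshift_lower_bound (n k : ℕ) (hk : 2 ≤ k) (hkn : k ≤ n - 1) :
    1 / ((k : ℚ) * ((n : ℚ) - 1)) ≤ (Fshift k n).coeff 2 := by
  obtain ⟨a, rfl⟩ : ∃ a, k = a + 2 := ⟨k - 2, by omega⟩
  obtain ⟨b, rfl⟩ : ∃ b, n = a + b + 3 := ⟨n - a - 3, by omega⟩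
  refine le_trans ?_ (one_div_le_coeff_two_Fshift a b)
  gcongr <;> push_cast <;> linarith

end EhrhartMatroid
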